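/- Let D be a demicap in (ZMod 3)^4 with anchor point a. Then among the 71 points of (ZMod 3)^4 not in D, exactly one (the anchor a) completes 5 lines with pairs of points of D, exactly 40 complete exactly one line, and exactly 30 complete no lines. -/

import Mathlib

abbrev V4 := Fin 4 → ZMod 3

def IsCap (C : Set V4) : Prop :=
  ∀ a ∈ C, ∀ b ∈ C, ∀ c ∈ C, a ≠ b → a ≠ c → b ≠ c → a + b + c ≠ 0

/-- A demicap with anchor `a`: a 10-point cap consisting of five `a`-lines, no four
of the five lines through `a` lying in a common affine hyperplane. -/
def IsDemicap (a : V4) (D : Finset V4) : Prop :=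
  D.card = 10 ∧ IsCap (↑D : Set V4) ∧
  ∃ d d' : Fin 5 → V4,
    (∀ i, a + d i + d' i = 0) ∧
    D = Finset.univ.image d ∪ Finset.univ.image d' ∧
    ¬ ∃ s : Finset (Fin 5), s.card = 4 ∧
      ∃ W : Submodule (ZMod 3) V4, Module.finrank (ZMod 3) W = 3 ∧
        ∀ i ∈ s, d i - a ∈ W

open scoped Classical in
/-- The number of lines that `p` completes with unordered pairs of points of `D`. -/
noncomputable def linesCompleted (D : Finset V4) (p : V4) : ℕ :=
  (D.sym2.filter fun z => ∃ x y : V4, z = s(x, y) ∧ x ≠ y ∧ p + x + y = 0).card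

/-!
Write the demicap as `D = {a + σ • eᵢ | σ = ±1}` with `eᵢ = dᵢ - a`; the non-coplanarity condition says
that any four of the `eᵢ` are linearly independent. Since `3 • a = 0`, the pair
`{a + σ • eᵢ, a + τ • eⱼ}` completes its line with `a - (σ • eᵢ + τ • eⱼ)`. For `i = j` this is the
anchor, and the five pairs `{dᵢ, d'ᵢ}` are the only ones doing so. For `i ≠ j` independence lets one read
the pair off its third point, so every other point completes at most one line. As `D` is a cap, none of
the `45` third points lies in `D`, so `45 - 5 = 40` points outside `D` complete exactly one line and the
remaining `71 - 1 - 40 = 30` complete none.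
-/

open Finset Module Function

theorem linearIndependent_of_forall_hyperplane_exists_notMem {K V ι : Type*} [Field K]
    [AddCommGroup V] [Module K V] [FiniteDimensional K V] [Fintype ι] {v : ι → V}
    (hcard : Fintype.card ι = finrank K V)
    (hv : ∀ W : Submodule K V, finrank K W + 1 = finrank K V → ∃ i, v i ∉ W) :
    LinearIndependent K v := by
  refine linearIndependent_of_top_le_span_of_card_eq_finrank ?_ hcard
  by_contra hspan
  obtain ⟨f, hf, hle⟩ := (Submodule.span K (Set.range v)).exists_le_ker_of_lt_top
    (lt_top_iff_ne_top.2 fun h => hspan h.ge)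
  obtain ⟨i, hi⟩ := hv _ (Module.Dual.finrank_ker_add_one_of_ne_zero hf)
  exact hi (hle (Submodule.subset_span ⟨i, rfl⟩))

theorem LinearIndependent.eq_of_linearCombination_eq {R M ι : Type*} [Ring R] [AddCommGroup M]
    [Module R M] [Fintype ι] {v : ι → M} {m : ι}
    (hv : LinearIndependent R fun i : {i // i ≠ m} => v i) {c c' : ι → R} (hm : c m = c' m)
    (h : Fintype.linearCombination R v c = Fintype.linearCombination R v c') : c = c' := by
  classical
  have hsum : ∑ i : {i // i ≠ m}, (c - c') i • v i = 0 := by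
    rw [← sub_eq_zero, ← map_sub, Fintype.linearCombination_apply,
      Fintype.sum_eq_add_sum_subtype_ne _ m] at h
    simpa [hm] using h
  funext i
  by_cases hi : i = m
  · exact hi ▸ hm
  · exact sub_eq_zero.1 (Fintype.linearIndependent_iff.1 hv _ hsum ⟨i, hi⟩)

theorem Pi.sym2_eq_of_single_add_single_eq {ι M : Type*} [DecidableEq ι] [AddCommMonoid M]
    {i j k l : ι} {σ τ σ' τ' : M} (hij : i ≠ j) (hσ : σ ≠ 0) (hτ : τ ≠ 0)
    (h : (Pi.single i σ + Pi.single j τ : ι → M) = Pi.single k σ' + Pi.single l τ') :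
    s((i, σ), (j, τ)) = s((k, σ'), (l, τ')) := by
  have hi := congrFun h i
  have hj := congrFun h j
  have hk := congrFun h k
  have hl := congrFun h l
  simp only [Pi.add_apply, Pi.single_apply] at hi hj hk hl
  simp only [Sym2.eq_iff, Prod.mk.injEq]
  grind

theorem sym2_eq_of_smul_add_smul_eq {R M : Type*} [Ring R] [AddCommGroup M] [Module R M]
    {e : Fin 5 → M} (he : ∀ m, LinearIndependent R fun i : {i // i ≠ m} => e i.1)
    {i j k l : Fin 5} {σ τ σ' τ' : R} (hij : i ≠ j) (hσ : σ ≠ 0) (hτ : τ ≠ 0)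
    (h : σ • e i + τ • e j = σ' • e k + τ' • e l) :
    s((i, σ), (j, τ)) = s((k, σ'), (l, τ')) := by
  have havoid : ∀ i j k l : Fin 5, ∃ m, m ≠ i ∧ m ≠ j ∧ m ≠ k ∧ m ≠ l := by decide
  obtain ⟨m, hmi, hmj, hmk, hml⟩ := havoid i j k l
  refine Pi.sym2_eq_of_single_add_single_eq hij hσ hτ ((he m).eq_of_linearCombination_eq ?_ ?_)
  · simp [hmi, hmj, hmk, hml]
  · simpa [Fintype.linearCombination_apply_single] using h

theorem injective_and_ne_of_card_image_union {ι α : Type*} [Fintype ι] [DecidableEq α]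
    {d d' : ι → α} (h : #(univ.image d ∪ univ.image d') = 2 * Fintype.card ι) :
    Injective d ∧ ∀ i j, d i ≠ d' j := by
  have hd : #(univ.image d) ≤ Fintype.card ι := card_image_le
  have hd' : #(univ.image d') ≤ Fintype.card ι := card_image_le
  have hinter := card_union_add_card_inter (univ.image d) (univ.image d')
  refine ⟨fun i j hij => card_image_iff.1 (by rw [card_univ]; omega) (mem_univ i) (mem_univ j) hij,
    fun i j hij => ?_⟩
  have : 0 < #(univ.image d ∩ univ.image d') :=
    card_pos.2 ⟨d i, mem_inter.2 ⟨mem_image_of_mem _ (mem_univ i),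
      hij ▸ mem_image_of_mem _ (mem_univ j)⟩⟩
  omega

theorem card_filter_eq_one_of_le_one_off {α : Type*} {T : Finset α} {f : α → ℕ} {a : α}
    (ha : a ∈ T) (hfa : 1 < f a) (hle : ∀ p ∈ T, p ≠ a → f p ≤ 1) :
    f a + #{p ∈ T | f p = 1} = ∑ p ∈ T, f p ∧
      1 + #{p ∈ T | f p = 1} + #{p ∈ T | f p = 0} = #T := by
  classical
  have hfilter (n : ℕ) (hn : f a ≠ n) : {p ∈ T | f p = n} = {p ∈ T.erase a | f p = n} := by
    rw [filter_erase, erase_eq_of_notMem (by simp [hn])]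
  have hle' : ∀ p ∈ T.erase a, f p ≤ 1 := fun p hp =>
    hle p (mem_of_mem_erase hp) (ne_of_mem_erase hp)
  have hsum : ∑ p ∈ T.erase a, f p = #{p ∈ T.erase a | f p = 1} := by
    rw [card_filter]
    refine sum_congr rfl fun p hp => ?_
    have := hle' p hp
    split_ifs <;> omega
  have hsplit := card_filter_add_card_filter_not (s := T.erase a) (fun p => f p = 1)
  rw [filter_congr fun p hp => (show ¬f p = 1 ↔ f p = 0 by have := hle' p hp; omega)] at hsplit
  rw [hfilter 1 hfa.ne', hfilter 0 (by omega), ← add_sum_erase T f ha, hsum,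
    ← card_erase_add_one ha]
  omega

def distinctPairs {α : Type*} [DecidableEq α] (s : Finset α) : Finset (Sym2 α) :=
  {z ∈ s.sym2 | ¬z.IsDiag}

theorem mk_mem_distinctPairs {α : Type*} [DecidableEq α] {s : Finset α} {x y : α} :
    s(x, y) ∈ distinctPairs s ↔ x ∈ s ∧ y ∈ s ∧ x ≠ y := by
  simp [distinctPairs, and_assoc]

theorem card_distinctPairs {α : Type*} [DecidableEq α] (s : Finset α) :
    #(distinctPairs s) = (#s).choose 2 := by
  rw [distinctPairs, sym2_eq_image, Sym2.filter_image_mk_not_isDiag, Sym2.card_image_offDiag]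

/-- In a vector space over `ZMod 3` the line through `x ≠ y` is `{x, y, -(x + y)}`. -/
def thirdPoint {G : Type*} [AddCommGroup G] : Sym2 G → G :=
  Sym2.lift ⟨fun x y => -(x + y), fun x y => by simp only [add_comm]⟩

@[simp]
theorem thirdPoint_mk {G : Type*} [AddCommGroup G] (x y : G) : thirdPoint s(x, y) = -(x + y) :=
  rfl

theorem exists_eq_add_smul_of_mem_image_union {V ι : Type*} [AddCommGroup V]
    [Module (ZMod 3) V] [DecidableEq V] [Fintype ι] {a : V} {d d' : ι → V}
    (hline : ∀ i, a + d i + d' i = 0) :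
    ∀ x ∈ univ.image d ∪ univ.image d', ∃ i, ∃ σ : ZMod 3, σ ≠ 0 ∧ x = a + σ • (d i - a) := by
  have h3 : 3 • a = 0 := ZModModule.char_nsmul_eq_zero 3 a
  simp only [mem_union, mem_image, mem_univ, true_and]
  rintro x (⟨i, rfl⟩ | ⟨i, rfl⟩)
  · exact ⟨i, 1, one_ne_zero, by module⟩
  · exact ⟨i, -1, by decide, by linear_combination (norm := module) hline i - h3⟩

theorem exists_eq_mk_of_thirdPoint_ne {V ι : Type*} [AddCommGroup V] [Module (ZMod 3) V]
    [DecidableEq V] {a : V} {e : ι → V} {D : Finset V}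
    (hD : ∀ x ∈ D, ∃ i, ∃ σ : ZMod 3, σ ≠ 0 ∧ x = a + σ • e i) {z : Sym2 V}
    (hz : z ∈ distinctPairs D) (ha : thirdPoint z ≠ a) :
    ∃ i j, ∃ σ τ : ZMod 3, i ≠ j ∧ σ ≠ 0 ∧ τ ≠ 0 ∧ z = s(a + σ • e i, a + τ • e j) ∧
      thirdPoint z = a - (σ • e i + τ • e j) := by
  induction z using Sym2.ind with
  | h x y =>
    obtain ⟨hx, hy, hxy⟩ := mk_mem_distinctPairs.1 hz
    obtain ⟨i, σ, hσ, rfl⟩ := hD x hx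
    obtain ⟨j, τ, hτ, rfl⟩ := hD y hy
    have h3 : 3 • a = 0 := ZModModule.char_nsmul_eq_zero 3 a
    have hthird : thirdPoint s(a + σ • e i, a + τ • e j) = a - (σ • e i + τ • e j) := by
      rw [thirdPoint_mk]
      linear_combination (norm := module) -h3
    refine ⟨i, j, σ, τ, fun hij => ?_, hσ, hτ, rfl, hthird⟩
    subst hij
    have hsigns : ∀ σ τ : ZMod 3, σ ≠ 0 → τ ≠ 0 → σ ≠ τ → σ + τ = 0 := by decide
    have hστ := hsigns σ τ hσ hτ fun h => hxy (by rw [h])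
    exact ha (by rw [hthird, ← add_smul, hστ, zero_smul, sub_zero])

theorem linesCompleted_eq_card_filter (D : Finset V4) (p : V4) :
    linesCompleted D p = #{z ∈ distinctPairs D | thirdPoint z = p} := by
  rw [linesCompleted, distinctPairs, filter_filter]
  congr 1
  refine filter_congr fun z _ => ?_
  induction z using Sym2.ind with
  | h x y =>
    constructor
    · rintro ⟨x', y', hz, hne, hp⟩
      rw [hz, Sym2.mk_isDiag_iff, thirdPoint_mk]
      exact ⟨hne, by linear_combination (norm := module) -hp⟩
    · rintro ⟨hne, hp⟩
      rw [Sym2.mk_isDiag_iff] at hne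
      exact ⟨x, y, rfl, hne, by rw [← hp, thirdPoint_mk]; abel⟩

theorem IsCap.thirdPoint_notMem {D : Finset V4} (hD : IsCap (D : Set V4)) {z : Sym2 V4}
    (hz : z ∈ distinctPairs D) : thirdPoint z ∉ D := by
  induction z using Sym2.ind with
  | h x y =>
    obtain ⟨hx, hy, hxy⟩ := mk_mem_distinctPairs.1 hz
    intro hp
    rw [thirdPoint_mk] at hp
    have h3x : 3 • x = 0 := ZModModule.char_nsmul_eq_zero 3 x
    have h3y : 3 • y = 0 := ZModModule.char_nsmul_eq_zero 3 y
    refine hD x hx y hy _ hp hxy ?_ ?_ (by abel)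
    · intro h
      exact hxy (sub_eq_zero.1 (by linear_combination (norm := module) h3x - h))
    · intro h
      exact hxy (sub_eq_zero.1 (by linear_combination (norm := module) h - h3y))

theorem IsCap.sum_linesCompleted {D : Finset V4} (hD : IsCap (D : Set V4)) :
    ∑ p ∈ univ \ D, linesCompleted D p = (#D).choose 2 := by
  simp_rw [linesCompleted_eq_card_filter]
  rw [← card_eq_sum_card_fiberwise fun z hz => mem_sdiff.2 ⟨mem_univ _, hD.thirdPoint_notMem hz⟩,
    card_distinctPairs]

theorem IsCap.notMem_of_linesCompleted_pos {D : Finset V4} (hD : IsCap (D : Set V4)) {p : V4}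
    (hp : 0 < linesCompleted D p) : p ∉ D := by
  rw [linesCompleted_eq_card_filter] at hp
  obtain ⟨z, hz⟩ := card_pos.1 hp
  obtain ⟨hzD, rfl⟩ := mem_filter.1 hz
  exact hD.thirdPoint_notMem hzD

theorem linesCompleted_image_union_image {ι : Type*} [Fintype ι] {a : V4} {d d' : ι → V4}
    (hline : ∀ i, a + d i + d' i = 0) (hd : Injective d) (hdd' : ∀ i j, d i ≠ d' j) :
    linesCompleted (univ.image d ∪ univ.image d') a = Fintype.card ι := by
  have hfiber : {z ∈ distinctPairs (univ.image d ∪ univ.image d') | thirdPoint z = a} =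
      univ.image fun i => s(d i, d' i) := by
    ext z
    simp only [mem_filter, mem_image, mem_univ, true_and]
    constructor
    · induction z using Sym2.ind with
      | h x y =>
        simp only [mk_mem_distinctPairs, thirdPoint_mk, mem_union, mem_image, mem_univ, true_and]
        rintro ⟨⟨⟨i, rfl⟩ | ⟨i, rfl⟩, -, -⟩, hxy⟩
        · obtain rfl : y = d' i := by linear_combination -hxy - hline i
          exact ⟨i, rfl⟩
        · obtain rfl : y = d i := by linear_combination -hxy - hline i
          exact ⟨i, Sym2.eq_swap⟩
    · rintro ⟨i, rfl⟩
      refine ⟨mk_mem_distinctPairs.2 ⟨mem_union_left _ (mem_image_of_mem _ (mem_univ i)),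
        mem_union_right _ (mem_image_of_mem _ (mem_univ i)), hdd' i i⟩, ?_⟩
      rw [thirdPoint_mk]
      linear_combination -hline i
  rw [linesCompleted_eq_card_filter, hfiber, card_image_of_injective _ fun i j hij => ?_, card_univ]
  rcases Sym2.eq_iff.1 hij with ⟨h, -⟩ | ⟨h, -⟩
  · exact hd h
  · exact absurd h (hdd' i j)

theorem linearIndependent_of_not_exists_hyperplane {e : Fin 5 → V4}
    (h : ¬ ∃ s : Finset (Fin 5), s.card = 4 ∧
      ∃ W : Submodule (ZMod 3) V4, finrank (ZMod 3) W = 3 ∧ ∀ i ∈ s, e i ∈ W)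
    (m : Fin 5) : LinearIndependent (ZMod 3) fun i : {i // i ≠ m} => e i.1 := by
  refine linearIndependent_of_forall_hyperplane_exists_notMem (by simp) fun W hW => ?_
  by_contra! hmem
  simp only [finrank_fin_fun] at hW
  exact h ⟨univ.erase m, by simp, W, by omega, fun i hi => hmem ⟨i, ne_of_mem_erase hi⟩⟩

theorem linesCompleted_le_one {a p : V4} {e : Fin 5 → V4} {D : Finset V4}
    (he : ∀ m, LinearIndependent (ZMod 3) fun i : {i // i ≠ m} => e i.1)
    (hD : ∀ x ∈ D, ∃ i, ∃ σ : ZMod 3, σ ≠ 0 ∧ x = a + σ • e i) (hpa : p ≠ a) :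
    linesCompleted D p ≤ 1 := by
  rw [linesCompleted_eq_card_filter, card_le_one]
  intro z hz z' hz'
  obtain ⟨hzD, rfl⟩ := mem_filter.1 hz
  obtain ⟨hz'D, hzz'⟩ := mem_filter.1 hz'
  obtain ⟨i, j, σ, τ, hij, hσ, hτ, rfl, hp⟩ := exists_eq_mk_of_thirdPoint_ne hD hzD hpa
  obtain ⟨k, l, σ', τ', -, -, -, rfl, hp'⟩ := exists_eq_mk_of_thirdPoint_ne hD hz'D (hzz' ▸ hpa)
  have hsym := sym2_eq_of_smul_add_smul_eq he hij hσ hτ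
    (sub_right_injective (hp.symm.trans (hzz' ▸ hp')))
  simpa using congrArg (Sym2.map fun q : Fin 5 × ZMod 3 => a + q.2 • e q.1) hsym

theorem demicap_line_completion_counts (a : V4) (D : Finset V4) (h : IsDemicap a D) :
    linesCompleted D a = 5 ∧
    ((Finset.univ \ D).filter fun p => linesCompleted D p = 5).card = 1 ∧
    ((Finset.univ \ D).filter fun p => linesCompleted D p = 1).card = 40 ∧
    ((Finset.univ \ D).filter fun p => linesCompleted D p = 0).card = 30 := by
  obtain ⟨hcard, hcap, d, d', hline, hD, hgen⟩ := h
  obtain ⟨hd, hdd'⟩ := injective_and_ne_of_card_image_union (d := d) (d' := d') (hD ▸ hcard)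
  have ha : linesCompleted D a = 5 := hD ▸ linesCompleted_image_union_image hline hd hdd'
  have hle : ∀ p ≠ a, linesCompleted D p ≤ 1 := fun p =>
    linesCompleted_le_one (linearIndependent_of_not_exists_hyperplane hgen)
      (hD ▸ exists_eq_add_smul_of_mem_image_union hline)
  have haD : a ∉ D := hcap.notMem_of_linesCompleted_pos (by omega)
  have haT : a ∈ univ \ D := mem_sdiff.2 ⟨mem_univ a, haD⟩
  have hT : #(univ \ D) = 71 := by rw [card_univ_sdiff, hcard]; rfl
  obtain ⟨h1, h0⟩ := card_filter_eq_one_of_le_one_off haT (by omega) fun p _ => hle p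
  rw [ha, hcap.sum_linesCompleted, hcard, show Nat.choose 10 2 = 45 from rfl] at h1
  have h5 : {p ∈ univ \ D | linesCompleted D p = 5} = {a} := by
    refine eq_singleton_iff_unique_mem.2 ⟨mem_filter.2 ⟨haT, ha⟩, fun p hp => ?_⟩
    by_contra hpa
    have := (mem_filter.1 hp).2
    have := hle p hpa
    omega
  exact ⟨ha, by rw [h5, card_singleton], by omega, by omega⟩
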